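/- Existence, uniqueness, and boundary exit of backward characteristics: Let l > 0, T > 0, and let λ : ℝ² → ℝ be continuously differentiable with λ(x,t) > 0 for all (x,t) ∈ [0,l]×[0,T]. Then for every (x,t) ∈ [0,l]×[0,T] there exist a unique t* ∈ [0,t] and a unique continuously differentiable function ω : [t*, t] → [0,l] such that ω(t) = x, ω′(τ) = λ(ω(τ), τ) for all τ ∈ [t*, t], ω(τ) ∈ [0,l] for all τ ∈ [t*, t], and either t* = 0 or ω(t*) = 0. Moreover, ω(τ) < x for all τ ∈ [t*, t) (in particular the characteristic can only leave [0,l]×[0,T] backward in time through the initial line t = 0 or the lateral boundary x = 0), and if t* > 0 then ω(t*) = 0. -/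

import Mathlib

/-!
The coefficient is clamped in `x` to `[0,l]`, which makes it bounded and globally Lipschitz in `x`
on `[0,t]`, so Picard–Lindelöf gives a solution `y` on all of `[0,t]` with `y t = x`. Since
`λ > 0`, `y` is strictly increasing; the exit time is `0` if `y 0 ≥ 0` and otherwise the zero of
`y` given by the intermediate value theorem. On `[t*,t]` the solution stays in `[0,l]`, where
clamping does nothing. Uniqueness of the characteristic on a common interval is Grönwall;
uniqueness of the exit time follows from monotonicity: a characteristic that exits later sits at
`0` there, so one that is defined further back would have to go negative.
-/

open Set

noncomputable section

/-- The rectangle `[0,l] × [0,T]` as a subset of `ℝ × ℝ` (first coordinate `x`,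
second coordinate `t`). -/
def MixedRect (l T : ℝ) : Set (ℝ × ℝ) := Set.Icc 0 l ×ˢ Set.Icc 0 T

open NNReal

section ODE

variable {E : Type*} [NormedAddCommGroup E] [NormedSpace ℝ E]

theorem exists_hasDerivWithinAt_Icc_of_lipschitzWith [CompleteSpace E] {f : ℝ → E → E}
    {a b : ℝ} {K L : ℝ≥0} (t₀ : Icc a b) (x₀ : E)
    (hlip : ∀ t ∈ Icc a b, LipschitzWith K (f t))
    (hcont : ∀ x, ContinuousOn (f · x) (Icc a b))
    (hbound : ∀ t ∈ Icc a b, ∀ x, ‖f t x‖ ≤ L) :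
    ∃ α : ℝ → E, α t₀ = x₀ ∧ ∀ t ∈ Icc a b, HasDerivWithinAt α (f t (α t)) (Icc a b) t := by
  have hab : 0 ≤ b - a := sub_nonneg.2 (t₀.2.1.trans t₀.2.2)
  have hf : IsPicardLindelof f t₀ x₀ ⟨L * (b - a), by positivity⟩ 0 L K :=
    { lipschitzOnWith := fun t ht => (hlip t ht).lipschitzOnWith
      continuousOn := fun x _ => hcont x
      norm_le := fun t ht x _ => hbound t ht x
      mul_max_le := by
        rw [NNReal.coe_zero, sub_zero]
        exact mul_le_mul_of_nonneg_left
          (max_le (by linarith [t₀.2.1]) (by linarith [t₀.2.2])) L.2 }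
  exact hf.exists_eq_forall_mem_Icc_hasDerivWithinAt₀

theorem eqOn_Icc_of_hasDerivWithinAt_of_eq_right {v : ℝ → E → E} {s : ℝ → Set E} {K : ℝ≥0}
    {f g : ℝ → E} {a b : ℝ} (hv : ∀ t ∈ Ioc a b, LipschitzOnWith K (v t) (s t))
    (hf : ∀ t ∈ Icc a b, HasDerivWithinAt f (v t (f t)) (Icc a b) t)
    (hfs : ∀ t ∈ Ioc a b, f t ∈ s t)
    (hg : ∀ t ∈ Icc a b, HasDerivWithinAt g (v t (g t)) (Icc a b) t)
    (hgs : ∀ t ∈ Ioc a b, g t ∈ s t) (hb : f b = g b) :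
    EqOn f g (Icc a b) :=
  ODE_solution_unique_of_mem_Icc_left hv (fun t ht => (hf t ht).continuousWithinAt)
    (fun t ht => (hf t (Ioc_subset_Icc_self ht)).mono_of_mem_nhdsWithin
      (Icc_mem_nhdsLE_of_mem ht)) hfs
    (fun t ht => (hg t ht).continuousWithinAt)
    (fun t ht => (hg t (Ioc_subset_Icc_self ht)).mono_of_mem_nhdsWithin
      (Icc_mem_nhdsLE_of_mem ht)) hgs hb

end ODE

theorem strictMonoOn_Icc_of_hasDerivWithinAt_pos {f f' : ℝ → ℝ} {a b : ℝ}
    (hf : ∀ t ∈ Icc a b, HasDerivWithinAt f (f' t) (Icc a b) t)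
    (hf' : ∀ t ∈ Ioo a b, 0 < f' t) : StrictMonoOn f (Icc a b) := by
  refine strictMonoOn_of_hasDerivWithinAt_pos (convex_Icc a b)
    (fun t ht => (hf t ht).continuousWithinAt) (fun t ht => ?_) (by rwa [interior_Icc])
  rw [interior_Icc] at ht ⊢
  exact (hf t (Ioo_subset_Icc_self ht)).mono Ioo_subset_Icc_self

theorem ContinuousOn.exists_mem_Icc_nonneg_and_eq_left_or_eq_zero {f : ℝ → ℝ} {a b : ℝ}
    (hab : a ≤ b) (hf : ContinuousOn f (Icc a b)) (hb : 0 ≤ f b) :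
    ∃ s ∈ Icc a b, 0 ≤ f s ∧ (s = a ∨ f s = 0) := by
  by_cases ha : 0 ≤ f a
  · exact ⟨a, left_mem_Icc.2 hab, ha, Or.inl rfl⟩
  · obtain ⟨s, hs, hfs⟩ := intermediate_value_Icc hab hf ⟨(not_le.1 ha).le, hb⟩
    exact ⟨s, hs, hfs.ge, Or.inr hfs⟩

theorem isCompact_mixedRect (l T : ℝ) : IsCompact (MixedRect l T) :=
  isCompact_Icc.prod isCompact_Icc

theorem ContDiff.exists_lipschitzOnWith_mixedRect_slices {lam : ℝ × ℝ → ℝ}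
    (hlam : ContDiff ℝ 1 lam) (l T : ℝ) :
    ∃ K, ∀ τ ∈ Icc 0 T, LipschitzOnWith K (fun z => lam (z, τ)) (Icc 0 l) := by
  obtain ⟨K, hK⟩ := hlam.locallyLipschitz.locallyLipschitzOn.exists_lipschitzOnWith_of_compact
    (isCompact_mixedRect l T)
  refine ⟨K, fun τ hτ => ?_⟩
  have h := hK.comp (LipschitzWith.prodMk_right τ).lipschitzOnWith fun z hz => ⟨hz, hτ⟩
  rwa [mul_one] at h

structure IsBackwardCharacteristic (lam : ℝ × ℝ → ℝ) (l x t ts : ℝ) (ω : ℝ → ℝ) : Prop where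
  apply_right : ω t = x
  hasDerivWithinAt : ∀ τ ∈ Icc ts t, HasDerivWithinAt ω (lam (ω τ, τ)) (Icc ts t) τ
  mem : ∀ τ ∈ Icc ts t, ω τ ∈ Icc 0 l
  exit : ts = 0 ∨ ω ts = 0

namespace IsBackwardCharacteristic

variable {lam : ℝ × ℝ → ℝ} {l T x t ts ts' : ℝ} {ω ω' : ℝ → ℝ}

theorem _root_.isBackwardCharacteristic_iff :
    IsBackwardCharacteristic lam l x t ts ω ↔
      ω t = x ∧ (∀ τ ∈ Icc ts t, HasDerivWithinAt ω (lam (ω τ, τ)) (Icc ts t) τ) ∧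
        (∀ τ ∈ Icc ts t, ω τ ∈ Icc 0 l) ∧ (ts = 0 ∨ ω ts = 0) :=
  ⟨fun h => ⟨h.1, h.2, h.3, h.4⟩, fun ⟨h₁, h₂, h₃, h₄⟩ => ⟨h₁, h₂, h₃, h₄⟩⟩

theorem strictMonoOn (hω : IsBackwardCharacteristic lam l x t ts ω) (hts : 0 ≤ ts) (htT : t ≤ T)
    (hpos : ∀ p ∈ MixedRect l T, 0 < lam p) : StrictMonoOn ω (Icc ts t) :=
  strictMonoOn_Icc_of_hasDerivWithinAt_pos hω.hasDerivWithinAt fun τ hτ =>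
    hpos _ ⟨hω.mem τ (Ioo_subset_Icc_self hτ), hts.trans hτ.1.le, hτ.2.le.trans htT⟩

theorem eqOn (hω : IsBackwardCharacteristic lam l x t ts ω)
    (hω' : IsBackwardCharacteristic lam l x t ts' ω') (hts : 0 ≤ ts) (htT : t ≤ T)
    (hlam : ContDiff ℝ 1 lam) : EqOn ω ω' (Icc (max ts ts') t) := by
  obtain ⟨K, hK⟩ := hlam.exists_lipschitzOnWith_mixedRect_slices l T
  have hsub : Icc (max ts ts') t ⊆ Icc ts t := Icc_subset_Icc_left (le_max_left _ _)
  have hsub' : Icc (max ts ts') t ⊆ Icc ts' t := Icc_subset_Icc_left (le_max_right _ _)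
  refine eqOn_Icc_of_hasDerivWithinAt_of_eq_right (v := fun τ z => lam (z, τ))
    (s := fun _ => Icc 0 l)
    (fun τ hτ => hK τ ⟨hts.trans ((le_max_left _ _).trans hτ.1.le), hτ.2.trans htT⟩)
    (fun τ hτ => (hω.hasDerivWithinAt τ (hsub hτ)).mono hsub)
    (fun τ hτ => hω.mem τ (hsub (Ioc_subset_Icc_self hτ)))
    (fun τ hτ => (hω'.hasDerivWithinAt τ (hsub' hτ)).mono hsub')
    (fun τ hτ => hω'.mem τ (hsub' (Ioc_subset_Icc_self hτ)))
    (hω.apply_right.trans hω'.apply_right.symm)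

theorem exitTime_le (hω : IsBackwardCharacteristic lam l x t ts ω)
    (hω' : IsBackwardCharacteristic lam l x t ts' ω') (hts : ts ≤ t)
    (hts' : ts' ∈ Icc 0 t) (htT : t ≤ T) (hlam : ContDiff ℝ 1 lam)
    (hpos : ∀ p ∈ MixedRect l T, 0 < lam p) : ts ≤ ts' := by
  by_contra! hlt
  have hωts : ω ts = 0 := hω.exit.resolve_left (hts'.1.trans_lt hlt).ne'
  have hagree : ω' ts = ω ts := hω'.eqOn hω hts'.1 htT hlam ⟨(max_eq_right hlt.le).le, hts⟩
  have hdecr : ω' ts' < ω' ts :=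
    hω'.strictMonoOn hts'.1 htT hpos ⟨le_rfl, hts'.2⟩ ⟨hlt.le, hts⟩ hlt
  linarith [(hω'.mem ts' ⟨le_rfl, hts'.2⟩).1]

end IsBackwardCharacteristic

theorem exists_hasDerivWithinAt_projIcc {lam : ℝ × ℝ → ℝ} (hlam : ContDiff ℝ 1 lam)
    {l T : ℝ} (hl : 0 ≤ l) (x : ℝ) {t : ℝ} (ht : t ∈ Icc 0 T) :
    ∃ y : ℝ → ℝ, y t = x ∧
      ∀ τ ∈ Icc 0 t, HasDerivWithinAt y (lam (projIcc 0 l hl (y τ), τ)) (Icc 0 t) τ := by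
  obtain ⟨K, hK⟩ := hlam.exists_lipschitzOnWith_mixedRect_slices l T
  obtain ⟨C, hC⟩ :=
    (isCompact_mixedRect l T).exists_bound_of_continuousOn hlam.continuous.continuousOn
  have hT : ∀ τ ∈ Icc 0 t, τ ∈ Icc 0 T := fun τ hτ => ⟨hτ.1, hτ.2.trans ht.2⟩
  refine exists_hasDerivWithinAt_Icc_of_lipschitzWith (f := fun τ z => lam (projIcc 0 l hl z, τ))
    (K := K) (L := C.toNNReal) ⟨t, ht.1, le_rfl⟩ x
    (fun τ hτ => ?_) (fun z => ?_) (fun τ hτ z => ?_)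
  · have hclamp := (LipschitzWith.subtype_val _).comp (LipschitzWith.projIcc hl)
    have h := (hK τ (hT τ hτ)).comp hclamp.lipschitzOnWith (s := univ) fun z _ =>
      (projIcc 0 l hl z).2
    rw [mul_one, mul_one, lipschitzOnWith_univ] at h
    exact h
  · exact (hlam.continuous.comp (continuous_const.prodMk continuous_id)).continuousOn
  · exact (hC _ ⟨(projIcc 0 l hl z).2, hT τ hτ⟩).trans (Real.le_coe_toNNReal C)

theorem exists_isBackwardCharacteristic {lam : ℝ × ℝ → ℝ} (hlam : ContDiff ℝ 1 lam) {l T : ℝ}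
    (hpos : ∀ p ∈ MixedRect l T, 0 < lam p) {x t : ℝ} (hx : x ∈ Icc 0 l) (ht : t ∈ Icc 0 T) :
    ∃ ts ∈ Icc 0 t, ∃ ω, IsBackwardCharacteristic lam l x t ts ω := by
  have hl : 0 ≤ l := hx.1.trans hx.2
  obtain ⟨y, hyt, hy⟩ := exists_hasDerivWithinAt_projIcc hlam hl x ht
  have hmono : StrictMonoOn y (Icc 0 t) := strictMonoOn_Icc_of_hasDerivWithinAt_pos hy
    fun τ hτ => hpos _ ⟨(projIcc 0 l hl _).2, hτ.1.le, hτ.2.le.trans ht.2⟩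
  obtain ⟨ts, hts, hyts, hexit⟩ :=
    ContinuousOn.exists_mem_Icc_nonneg_and_eq_left_or_eq_zero ht.1
      (fun τ hτ => (hy τ hτ).continuousWithinAt) (hyt ▸ hx.1)
  have hsub : Icc ts t ⊆ Icc 0 t := Icc_subset_Icc_left hts.1
  have hymem : ∀ τ ∈ Icc ts t, y τ ∈ Icc 0 l := fun τ hτ =>
    ⟨hyts.trans (hmono.monotoneOn (hsub (left_mem_Icc.2 hts.2)) (hsub hτ) hτ.1),
      (hmono.monotoneOn (hsub hτ) (right_mem_Icc.2 ht.1) hτ.2).trans (hyt.le.trans hx.2)⟩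
  refine ⟨ts, hts, y, ⟨hyt, fun τ hτ => ?_, hymem, hexit⟩⟩
  have hderiv := (hy τ (hsub hτ)).mono hsub
  rwa [projIcc_of_mem hl (hymem τ hτ)] at hderiv

theorem statement6_general (l T : ℝ)
    (lam : ℝ × ℝ → ℝ) (hlam : ContDiff ℝ 1 lam)
    (hpos : ∀ p ∈ MixedRect l T, 0 < lam p) :
    ∀ x ∈ Set.Icc (0 : ℝ) l, ∀ t ∈ Set.Icc (0 : ℝ) T,
      ∃ ts ∈ Set.Icc (0 : ℝ) t, ∃ ω : ℝ → ℝ,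
        (ω t = x ∧
          (∀ τ ∈ Set.Icc ts t, HasDerivWithinAt ω (lam (ω τ, τ)) (Set.Icc ts t) τ) ∧
          (∀ τ ∈ Set.Icc ts t, ω τ ∈ Set.Icc 0 l) ∧
          (ts = 0 ∨ ω ts = 0)) ∧
        (∀ τ ∈ Set.Ico ts t, ω τ < x) ∧
        (0 < ts → ω ts = 0) ∧
        (∀ ts' ∈ Set.Icc (0 : ℝ) t, ∀ ω' : ℝ → ℝ,
          (ω' t = x ∧
            (∀ τ ∈ Set.Icc ts' t, HasDerivWithinAt ω' (lam (ω' τ, τ)) (Set.Icc ts' t) τ) ∧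
            (∀ τ ∈ Set.Icc ts' t, ω' τ ∈ Set.Icc 0 l) ∧
            (ts' = 0 ∨ ω' ts' = 0)) →
          ts' = ts ∧ Set.EqOn ω' ω (Set.Icc ts t)) := by
  intro x hx t ht
  obtain ⟨ts, hts, ω, hω⟩ := exists_isBackwardCharacteristic hlam hpos hx ht
  have hmono := hω.strictMonoOn hts.1 ht.2 hpos
  refine ⟨ts, hts, ω, isBackwardCharacteristic_iff.1 hω, fun τ hτ => ?_,
    fun h => hω.exit.resolve_left h.ne', fun ts' hts' ω' hω' => ?_⟩
  · exact hω.apply_right ▸ hmono ⟨hτ.1, hτ.2.le⟩ (right_mem_Icc.2 hts.2) hτ.2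
  replace hω' := isBackwardCharacteristic_iff.2 hω'
  obtain rfl : ts' = ts := le_antisymm (hω'.exitTime_le hω hts'.2 hts ht.2 hlam hpos)
    (hω.exitTime_le hω' hts.2 hts' ht.2 hlam hpos)
  exact ⟨rfl, max_self ts' ▸ hω'.eqOn hω hts'.1 ht.2 hlam⟩

/-- Existence, uniqueness, and boundary exit of backward characteristics:
if `λ` is `C¹` on `ℝ²` and positive on `[0,l] × [0,T]`, then through each point
`(x,t)` of the rectangle there is a unique exit time `t* ∈ [0,t]` and a unique
characteristic `ω : [t*,t] → [0,l]` with `ω(t) = x`, `ω′(τ) = λ(ω(τ),τ)` on `[t*,t]`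
(one-sided at the endpoints), and either `t* = 0` or `ω(t*) = 0`; moreover `ω(τ) < x`
for `τ ∈ [t*,t)`, and `t* > 0` implies `ω(t*) = 0`. -/
theorem statement6 (l T : ℝ) (hl : 0 < l) (hT : 0 < T)
    (lam : ℝ × ℝ → ℝ) (hlam : ContDiff ℝ 1 lam)
    (hpos : ∀ p ∈ MixedRect l T, 0 < lam p) :
    ∀ x ∈ Set.Icc (0 : ℝ) l, ∀ t ∈ Set.Icc (0 : ℝ) T,
      ∃ ts ∈ Set.Icc (0 : ℝ) t, ∃ ω : ℝ → ℝ,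
        (ω t = x ∧
          (∀ τ ∈ Set.Icc ts t, HasDerivWithinAt ω (lam (ω τ, τ)) (Set.Icc ts t) τ) ∧
          (∀ τ ∈ Set.Icc ts t, ω τ ∈ Set.Icc 0 l) ∧
          (ts = 0 ∨ ω ts = 0)) ∧
        (∀ τ ∈ Set.Ico ts t, ω τ < x) ∧
        (0 < ts → ω ts = 0) ∧
        (∀ ts' ∈ Set.Icc (0 : ℝ) t, ∀ ω' : ℝ → ℝ,
          (ω' t = x ∧
            (∀ τ ∈ Set.Icc ts' t, HasDerivWithinAt ω' (lam (ω' τ, τ)) (Set.Icc ts' t) τ) ∧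
            (∀ τ ∈ Set.Icc ts' t, ω' τ ∈ Set.Icc 0 l) ∧
            (ts' = 0 ∨ ω' ts' = 0)) →
          ts' = ts ∧ Set.EqOn ω' ω (Set.Icc ts t)) :=
  statement6_general l T lam hlam hpos
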